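/- Let K be a field, let {e_i}_{i=1}^∞ be a K-basis of an infinite-dimensional affine K-algebra R and let S = {r_1, r_2, …, r_s} ⊆ R. Suppose that for every l and every l-tuple {e_{i_1}, …, e_{i_l}} of distinct basis elements, the K-linear span of the vectors {e_{i_t}·r_j : 1 ≤ t ≤ l, 1 ≤ j ≤ s} has dimension at least 2l. Then there is a partition {e_i}_{i=1}^∞ = A_1 ∪ A_2 ∪ ⋯ ∪ A_m and elements g_1, h_1, g_2, h_2, …, g_m, h_m ∈ S such that the sets A_1g_1, A_1h_1, A_2g_2, A_2h_2, …, A_mg_m, A_mh_m are mutually independent, i.e. the combined family of all elements a·g_j and a·h_j (a ∈ A_j, 1 ≤ j ≤ m) is linearly independent over K; here Ag = {ag : a ∈ A}. -/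

import Mathlib

/-!
Duplicate every basis vector: the hypothesis says exactly that the family of finite sets
`X (i, b) = {e i * r j | j}`, indexed by `ℕ × Bool`, satisfies Rado's condition for the linear
matroid of `R`. Rado's theorem then gives an independent transversal `e i * r (j (i, b))`; it is
proved for finite index sets by Rado's deletion argument, which rests on the submodularity of
rank, and extends to `ℕ × Bool` by compactness. Grouping the indices `i` according to the pair
`(j (i, true), j (i, false))` gives the partition, into at most `s²` classes.
-/

open Module Submodule

section Rado

variable {K V ι : Type*} [Field K] [AddCommGroup V] [Module K V]

theorem finrank_span_finset_mono {P Q : Finset V} (h : P ⊆ Q) :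
    finrank K (span K (P : Set V)) ≤ finrank K (span K (Q : Set V)) :=
  finrank_mono (span_mono (Finset.coe_subset.mpr h))

variable [DecidableEq V]

variable (K) in
def RadoCondition (X : ι → Finset V) : Prop :=
  ∀ t : Finset ι, t.card ≤ finrank K (span K (t.biUnion X : Set V))

theorem finrank_span_union_add_finrank_span_inter_le (P Q : Finset V) :
    finrank K (span K ((P ∪ Q : Finset V) : Set V)) +
        finrank K (span K ((P ∩ Q : Finset V) : Set V)) ≤
      finrank K (span K (P : Set V)) + finrank K (span K (Q : Set V)) := by
  have hinter : span K ((P ∩ Q : Finset V) : Set V) ≤ span K P ⊓ span K Q :=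
    le_inf (span_mono (by simp)) (span_mono (by simp))
  have := finrank_sup_add_finrank_inf_eq (span K (P : Set V)) (span K (Q : Set V))
  rw [Finset.coe_union, span_union]
  linarith [finrank_mono hinter]

namespace RadoCondition

variable {X : ι → Finset V}

theorem comp_injective (hX : RadoCondition K X) {κ : Type*} {f : κ → ι} (hf : f.Injective) :
    RadoCondition K (X ∘ f) := by
  classical
  intro t
  have := hX (t.image f)
  rwa [Finset.image_biUnion, Finset.card_image_of_injective t hf] at this

theorem card_pos (hX : RadoCondition K X) (i : ι) : 0 < (X i).card := by
  have := hX {i}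
  rw [Finset.singleton_biUnion, Finset.card_singleton] at this
  exact this.trans (finrank_span_finset_le_card (X i))

theorem exists_finrank_le_of_not_update [DecidableEq ι] (hX : RadoCondition K X) {i₀ : ι}
    {Y : Finset V} (hY : ¬ RadoCondition K (Function.update X i₀ Y)) :
    ∃ s : Finset ι, i₀ ∉ s ∧
      finrank K (span K ((Y ∪ s.biUnion X : Finset V) : Set V)) ≤ s.card := by
  obtain ⟨t, ht⟩ := not_forall.mp hY
  have hi₀ : i₀ ∈ t := by
    by_contra hi₀
    rw [Finset.biUnion_congr rfl fun i hi =>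
      Function.update_of_ne (ne_of_mem_of_not_mem hi hi₀) _ _] at ht
    exact ht (hX t)
  refine ⟨t.erase i₀, Finset.notMem_erase _ _, ?_⟩
  rw [← Finset.insert_erase hi₀, Finset.biUnion_insert, Function.update_self,
    Finset.biUnion_congr rfl fun i hi => Function.update_of_ne (Finset.ne_of_mem_erase hi) _ _,
    Finset.card_insert_of_notMem (Finset.notMem_erase _ _)] at ht
  omega

/-- If both deletions failed, the two tight sets they produce would violate submodularity
of rank, since their spans together contain all of `X i₀`. -/
theorem update_erase_or (hX : RadoCondition K X) [DecidableEq ι] (i₀ : ι) {x y : V}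
    (hxy : x ≠ y) :
    RadoCondition K (Function.update X i₀ ((X i₀).erase x)) ∨
      RadoCondition K (Function.update X i₀ ((X i₀).erase y)) := by
  by_contra! h
  obtain ⟨sx, hsx, hrx⟩ := hX.exists_finrank_le_of_not_update h.1
  obtain ⟨sy, hsy, hry⟩ := hX.exists_finrank_le_of_not_update h.2
  set P := (X i₀).erase x ∪ sx.biUnion X
  set Q := (X i₀).erase y ∪ sy.biUnion X
  have hunion : (insert i₀ (sx ∪ sy)).biUnion X ⊆ P ∪ Q := by
    intro v hv
    simp only [P, Q, Finset.mem_biUnion, Finset.mem_insert, Finset.mem_union,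
      Finset.mem_erase] at hv ⊢
    grind
  have hinter : (sx ∩ sy).biUnion X ⊆ P ∩ Q := by
    intro v hv
    simp only [P, Q, Finset.mem_biUnion, Finset.mem_inter, Finset.mem_union] at hv ⊢
    grind
  have hbig := (hX _).trans (finrank_span_finset_mono (K := K) hunion)
  rw [Finset.card_insert_of_notMem (by simp [hsx, hsy])] at hbig
  have hsmall := (hX _).trans (finrank_span_finset_mono (K := K) hinter)
  have := finrank_span_union_add_finrank_span_inter_le (K := K) P Q
  have := Finset.card_union_add_card_inter sx sy
  omega

theorem exists_lt_sum_card [Fintype ι] (hX : RadoCondition K X) {i₀ : ι}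
    (hi₀ : 1 < (X i₀).card) :
    ∃ Y : ι → Finset V, RadoCondition K Y ∧ (∀ i, Y i ⊆ X i) ∧
      ∑ i, (Y i).card < ∑ i, (X i).card := by
  classical
  have hsmaller (z : V) (hz : z ∈ X i₀) :
      (∀ i, Function.update X i₀ ((X i₀).erase z) i ⊆ X i) ∧
        ∑ i, (Function.update X i₀ ((X i₀).erase z) i).card < ∑ i, (X i).card := by
    have hsub (i : ι) : Function.update X i₀ ((X i₀).erase z) i ⊆ X i := by
      rcases eq_or_ne i i₀ with rfl | hi
      · simpa using Finset.erase_subset z (X i)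
      · simp [hi]
    refine ⟨hsub, Finset.sum_lt_sum (fun i _ => Finset.card_le_card (hsub i)) ⟨i₀, by simp, ?_⟩⟩
    simpa using Finset.card_erase_lt_of_mem hz
  obtain ⟨x, hx, y, hy, hxy⟩ := Finset.one_lt_card.mp hi₀
  rcases hX.update_erase_or i₀ hxy with h | h
  exacts [⟨_, h, hsmaller x hx⟩, ⟨_, h, hsmaller y hy⟩]

theorem exists_linearIndependent_of_card_le_one [Fintype ι] (hX : RadoCondition K X)
    (h : ∀ i, (X i).card ≤ 1) : ∃ x : ι → V, (∀ i, x i ∈ X i) ∧ LinearIndependent K x := by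
  choose x hx using fun i => Finset.card_eq_one.mp (le_antisymm (h i) (hX.card_pos i))
  refine ⟨x, fun i => by simp [hx i], ?_⟩
  have hrange : Set.range x = (Finset.univ.biUnion X : Set V) := by ext v; simp [hx, eq_comm]
  rw [linearIndependent_iff_card_le_finrank_span, Set.finrank, hrange]
  exact hX Finset.univ

theorem exists_linearIndependent_of_fintype [Fintype ι] (hX : RadoCondition K X) :
    ∃ x : ι → V, (∀ i, x i ∈ X i) ∧ LinearIndependent K x := by
  induction hN : ∑ i, (X i).card using Nat.strong_induction_on generalizing X with
  | _ N ih =>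
  by_cases hbig : ∃ i, 1 < (X i).card
  · obtain ⟨i, hi⟩ := hbig
    obtain ⟨Y, hY, hYX, hlt⟩ := hX.exists_lt_sum_card hi
    obtain ⟨x, hxY, hx⟩ := ih _ (hN ▸ hlt) hY rfl
    exact ⟨x, fun i => hYX i (hxY i), hx⟩
  · push Not at hbig
    exact hX.exists_linearIndependent_of_card_le_one hbig

theorem exists_linearIndependent (hX : RadoCondition K X) :
    ∃ x : ι → V, (∀ i, x i ∈ X i) ∧ LinearIndependent K x := by
  choose y hyX hy using fun s : Finset ι =>
    (hX.comp_injective Subtype.val_injective).exists_linearIndependent_of_fintype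
      (ι := (s : Set ι))
  obtain ⟨χ, hχ⟩ := Finset.rado_selection_subtype (β := fun i => X i)
    fun s i => ⟨y s i, hyX s i⟩
  refine ⟨fun i => χ i, fun i => (χ i).2, linearIndependent_iff_finset_linearIndependent.mpr
    fun s => ?_⟩
  obtain ⟨t, hst, hχt⟩ := hχ s
  have : (fun i : s => (χ i : V)) = y t ∘ Set.inclusion hst :=
    funext fun i => congrArg Subtype.val (hχt i)
  rw [Function.comp_def, this]
  exact (hy t).comp _ (Set.inclusion_injective hst)

end RadoCondition

theorem radoCondition_comp_fst {κ : Type*} [Fintype κ] {Z : ι → Finset V}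
    (h : ∀ t : Finset ι, Fintype.card κ * t.card ≤ finrank K (span K (t.biUnion Z : Set V))) :
    RadoCondition K (fun p : ι × κ => Z p.1) := by
  classical
  intro t
  have hsub : t ⊆ t.image Prod.fst ×ˢ Finset.univ := fun p hp =>
    Finset.mem_product.mpr ⟨Finset.mem_image_of_mem _ hp, Finset.mem_univ _⟩
  calc t.card ≤ Fintype.card κ * (t.image Prod.fst).card := by
        simpa [mul_comm] using Finset.card_le_card hsub
    _ ≤ _ := h _
    _ = _ := by rw [Finset.image_biUnion]

end Rado

theorem exists_partition_linearIndependent_of_linearIndependent {K V α β : Type*} [Semiring K]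
    [AddCommMonoid V] [Module K V] [Fintype β] (w : α → β → V) (j : α × Bool → β)
    (hj : LinearIndependent K fun p : α × Bool => w p.1 (j p)) :
    ∃ (m : ℕ) (A : Fin m → Set α) (g h : Fin m → β),
      (⋃ i, A i) = Set.univ ∧ Pairwise (Function.onFun Disjoint A) ∧
      LinearIndependent K (fun p : (i : Fin m) × (↥(A i) × Bool) =>
        w p.2.1 (cond p.2.2 (g p.1) (h p.1))) := by
  let σ := Fintype.equivFin (β × β)
  let c (a : α) : Fin (Fintype.card (β × β)) := σ (j (a, true), j (a, false))
  refine ⟨_, fun k => c ⁻¹' {k}, fun k => (σ.symm k).1, fun k => (σ.symm k).2,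
    Set.iUnion_eq_univ_iff.mpr fun a => ⟨c a, rfl⟩, pairwise_disjoint_fiber c, ?_⟩
  have hinj : Function.Injective
      fun p : (k : Fin _) × (↥(c ⁻¹' {k}) × Bool) => ((p.2.1 : α), p.2.2) := by
    rintro ⟨k, ⟨a, ha⟩, b⟩ ⟨k', ⟨a', ha'⟩, b'⟩ h
    obtain ⟨rfl, rfl⟩ := Prod.mk.inj h
    obtain rfl : c a = k := ha
    obtain rfl : c a = k' := ha'
    rfl
  convert hj.comp _ hinj using 1
  funext ⟨k, ⟨a, ha⟩, b⟩
  obtain rfl : c a = k := ha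
  cases b <;> simp [c]

theorem paradoxical_decomposition_from_doubling_general (K : Type*) [Field K] (R : Type*) [Ring R]
    [Algebra K R]
    (e : Basis ℕ K R) {s : ℕ} (r : Fin s → R)
    (hcard : ∀ t : Finset ℕ,
      2 * t.card ≤ finrank K (Submodule.span K {v : R | ∃ i ∈ t, ∃ j, v = e i * r j})) :
    ∃ (m : ℕ) (A : Fin m → Set ℕ) (g h : Fin m → Fin s),
      (⋃ i, A i) = Set.univ ∧
      Pairwise (Function.onFun Disjoint A) ∧
      LinearIndependent K (fun p : (i : Fin m) × (↥(A i) × Bool) =>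
        e (p.2.1 : ℕ) * (cond p.2.2 (r (g p.1)) (r (h p.1)))) := by
  classical
  let X (i : ℕ) : Finset R := Finset.univ.image fun j => e i * r j
  have hX : RadoCondition K (fun p : ℕ × Bool => X p.1) := by
    refine radoCondition_comp_fst fun t => ?_
    have hspan :
        ((t.biUnion X : Finset R) : Set R) = {v : R | ∃ i ∈ t, ∃ j, v = e i * r j} := by
      ext v
      simp [X, eq_comm]
    rw [Fintype.card_bool, hspan]
    exact hcard t
  obtain ⟨x, hxX, hx⟩ := hX.exists_linearIndependent
  choose j _ hj using fun p => Finset.mem_image.mp (hxX p)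
  obtain ⟨m, A, g, h, hA, hdisj, hli⟩ :=
    exists_partition_linearIndependent_of_linearIndependent (K := K) (fun i j => e i * r j) j
      (by simpa only [hj] using hx)
  exact ⟨m, A, g, h, hA, hdisj, by simpa only [Bool.apply_cond] using hli⟩

/-- If `{eᵢ}` is a basis of an infinite dimensional affine algebra `R` and
`S = {r₁, …, r_s} ⊆ R` is such that for every `l`-tuple of distinct basis elements the span of
the products `e_{i_t}·r_j` is at least `2l`-dimensional, then the basis can be partitioned into
sets `A₁, …, A_m` with elements `g₁, h₁, …, g_m, h_m ∈ S` such that the sets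
`A₁g₁, A₁h₁, …, A_mg_m, A_mh_m` are mutually independent. -/
theorem paradoxical_decomposition_from_doubling (K : Type*) [Field K] (R : Type*) [Ring R]
    [Algebra K R] [Algebra.FiniteType K R]
    (hinf : ¬ FiniteDimensional K R)
    (e : Basis ℕ K R) {s : ℕ} (r : Fin s → R)
    (hcard : ∀ t : Finset ℕ,
      2 * t.card ≤ finrank K (Submodule.span K {v : R | ∃ i ∈ t, ∃ j, v = e i * r j})) :
    ∃ (m : ℕ) (A : Fin m → Set ℕ) (g h : Fin m → Fin s),
      (⋃ i, A i) = Set.univ ∧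
      Pairwise (Function.onFun Disjoint A) ∧
      LinearIndependent K (fun p : (i : Fin m) × (↥(A i) × Bool) =>
        e (p.2.1 : ℕ) * (cond p.2.2 (r (g p.1)) (r (h p.1)))) :=
  paradoxical_decomposition_from_doubling_general K R e r hcard
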